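/- arXiv:2105.13974 — 2 statements merged into one kernel-verified Lean document; each statement's English description precedes it below -/
import Mathlib

section
/- With the setup of the subdivision graph $\tilde G$ of a finite connected graph $G$: for every $k\in\mathbb N$ and all $x,y\in V(G)$, $(\Pi\,\tilde Q^{2k})(x,y)=\pi_G(y)$, where $\tilde Q$ is the simple random walk transition matrix on $\tilde G$, $\Pi$ is the orthogonal projection onto $\mathrm{span}(\boldsymbol 1, w)$ in $\ell^2(\tilde\pi)$, and $\pi_G$ is the stationary distribution of the random walk on $G$. -/
/-!
The vectors `1` and `w` are orthogonal in `ℓ²(π̃)`, both of squared norm `4|E|`, so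
`Π(a, b) = π̃(b) (1 + w(a) w(b)) / (4|E|)`, which is `π_G(y)` at two vertices `x, y`.
The walk `Q̃` swaps the two sides of the bipartition `V ⊔ E`, so `Q̃ 1 = 1` and `Q̃ w = -w`:
`Q̃^{2k}` fixes the range of `Π`, i.e. `Q̃^{2k} Π = Π`. Both `Π` and `Q̃` are self-adjoint in
`ℓ²(π̃)`, and taking adjoints gives `Π Q̃^{2k} = Π`.
-/

open SimpleGraph Finset

/-- The edge-subdivision graph of a simple graph. -/
def subdivisionGraph {V : Type*} (G : SimpleGraph V) :
    SimpleGraph (V ⊕ G.edgeSet) where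
  Adj a b :=
    match a, b with
    | Sum.inl x, Sum.inr e => x ∈ (e : Sym2 V)
    | Sum.inr e, Sum.inl x => x ∈ (e : Sym2 V)
    | _, _ => False
  symm := ⟨by rintro (x | e) (y | f) h <;> simp_all⟩
  loopless := ⟨by rintro (x | e) h <;> simp_all⟩

open Matrix

namespace Matrix

variable {ι R : Type*} [Fintype ι] [DecidableEq ι]

theorem pow_mulVec_of_mulVec_eq_smul [CommSemiring R] {M : Matrix ι ι R} {v : ι → R} {c : R}
    (h : M *ᵥ v = c • v) (n : ℕ) : (M ^ n) *ᵥ v = c ^ n • v := by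
  induction n with
  | zero => simp
  | succ n ih => rw [pow_succ', ← mulVec_mulVec, ih, mulVec_smul, h, smul_smul, pow_succ]

/-- `Q` is self-adjoint in `ℓ²(π)`; for a stochastic `Q` this is detailed balance. -/
def IsWeightedSymm [Mul R] (π : ι → R) (Q : Matrix ι ι R) : Prop :=
  ∀ a b, π a * Q a b = π b * Q b a

theorem isWeightedSymm_iff_diagonal_mul [CommSemiring R] {π : ι → R} {Q : Matrix ι ι R} :
    IsWeightedSymm π Q ↔ diagonal π * Q = Qᵀ * diagonal π := by
  simp only [IsWeightedSymm, Matrix.ext_iff.symm, diagonal_mul, mul_diagonal, transpose_apply,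
    mul_comm (Q _ _)]

theorem IsWeightedSymm.pow [CommSemiring R] {π : ι → R} {Q : Matrix ι ι R}
    (hQ : IsWeightedSymm π Q) (n : ℕ) : IsWeightedSymm π (Q ^ n) := by
  rw [isWeightedSymm_iff_diagonal_mul] at hQ ⊢
  rw [transpose_pow]
  exact SemiconjBy.pow_right hQ n

/-- `P * Q` is the `ℓ²(π)`-adjoint of `Q * P`. -/
theorem IsWeightedSymm.mul_eq_left_of_mul_eq_right [CommRing R] {π : ι → R}
    (hπ : ∀ a, IsUnit (π a)) {P Q : Matrix ι ι R} (hP : IsWeightedSymm π P)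
    (hQ : IsWeightedSymm π Q) (hQP : Q * P = P) : P * Q = P := by
  rw [isWeightedSymm_iff_diagonal_mul] at hP hQ
  refine (isUnit_diagonal.mpr (Pi.isUnit_iff.mpr hπ)).mul_left_cancel ?_
  calc diagonal π * (P * Q) = Pᵀ * (diagonal π * Q) := by
        rw [← Matrix.mul_assoc, hP, Matrix.mul_assoc]
    _ = (Q * P)ᵀ * diagonal π := by rw [hQ, transpose_mul, Matrix.mul_assoc]
    _ = diagonal π * P := by rw [hQP, hP]

theorem mul_eq_right_of_forall_mem_range [CommSemiring R] {P Q : Matrix ι ι R}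
    (h : ∀ v ∈ LinearMap.range P.mulVecLin, Q *ᵥ v = v) : Q * P = P :=
  ext_of_mulVec_single fun i => by
    rw [← mulVec_mulVec]
    exact h _ ⟨_, rfl⟩

theorem apply_eq_of_range_eq_span_pair {π u v : ι → ℝ} {P : Matrix ι ι ℝ}
    (hidem : P * P = P) (hP : IsWeightedSymm π P)
    (hrange : LinearMap.range P.mulVecLin = Submodule.span ℝ {u, v})
    (huv : ∑ i, π i * u i * v i = 0) (hu : ∑ i, π i * u i * u i ≠ 0)
    (hv : ∑ i, π i * v i * v i ≠ 0) (a b : ι) :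
    P a b = π b * (u a * u b / ∑ i, π i * u i * u i + v a * v b / ∑ i, π i * v i * v i) := by
  have hfix : ∀ f ∈ Submodule.span ℝ {u, v}, P *ᵥ f = f := by
    rintro f hf
    obtain ⟨g, rfl⟩ := hrange ▸ hf
    simp only [mulVecLin_apply, mulVec_mulVec, hidem]
  obtain ⟨α, β, hcol⟩ : ∃ α β : ℝ, α • u + β • v = fun a => P a b :=
    Submodule.mem_span_pair.mp (hrange ▸ ⟨Pi.single b 1, mulVec_single_one P b⟩)
  -- the `ℓ²(π)`-pairing of the column `α • u + β • v` with a fixed vector `f` of `P`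
  -- is `π b * f b`
  have hcoef : ∀ f ∈ Submodule.span ℝ {u, v},
      π b * f b = α * ∑ i, π i * u i * f i + β * ∑ i, π i * v i * f i := by
    intro f hf
    calc π b * f b = ∑ i, π i * P i b * f i := by
          conv_lhs => rw [← hfix f hf]
          simp only [mulVec, dotProduct, mul_sum, ← mul_assoc, hP b]
      _ = _ := by
          simp only [mul_sum, ← sum_add_distrib]
          refine sum_congr rfl fun i _ => ?_
          rw [← congrFun hcol i, Pi.add_apply, Pi.smul_apply, Pi.smul_apply, smul_eq_mul,
            smul_eq_mul]
          ring
  have hα := hcoef u (Submodule.subset_span (by simp))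
  have hβ := hcoef v (Submodule.subset_span (by simp))
  have hvu : ∑ i, π i * v i * u i = 0 := by simp_rw [mul_right_comm _ (v _)]; exact huv
  simp only [huv, hvu, mul_zero, add_zero, zero_add] at hα hβ
  rw [← congrFun hcol a, Pi.add_apply, Pi.smul_apply, Pi.smul_apply, smul_eq_mul, smul_eq_mul,
    eq_div_of_mul_eq hu hα.symm, eq_div_of_mul_eq hv hβ.symm]
  ring

end Matrix

section Subdivision

variable {V : Type*} (G : SimpleGraph V)

@[simp]
theorem subdivisionGraph_adj_inl_inr {x : V} {e : G.edgeSet} :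
    (subdivisionGraph G).Adj (.inl x) (.inr e) ↔ x ∈ (e : Sym2 V) := Iff.rfl

@[simp]
theorem subdivisionGraph_adj_inr_inl {x : V} {e : G.edgeSet} :
    (subdivisionGraph G).Adj (.inr e) (.inl x) ↔ x ∈ (e : Sym2 V) := Iff.rfl

@[simp]
theorem subdivisionGraph_not_adj_inl_inl {x y : V} :
    ¬(subdivisionGraph G).Adj (.inl x) (.inl y) :=
  id

@[simp]
theorem subdivisionGraph_not_adj_inr_inr {e f : G.edgeSet} :
    ¬(subdivisionGraph G).Adj (.inr e) (.inr f) :=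
  id

def subdivisionSign : V ⊕ G.edgeSet → ℝ :=
  Sum.elim (fun _ => 1) (fun _ => -1)

@[simp]
theorem subdivisionSign_inl (x : V) : subdivisionSign G (.inl x) = 1 := rfl

@[simp]
theorem subdivisionSign_inr (e : G.edgeSet) : subdivisionSign G (.inr e) = -1 := rfl

theorem subdivisionSign_mul_self (a : V ⊕ G.edgeSet) :
    subdivisionSign G a * subdivisionSign G a = 1 := by
  cases a <;> simp

variable [Fintype V]

theorem sum_edgeSet_ite_mem [DecidableEq V] [DecidableRel G.Adj] (x : V)
    [DecidablePred fun e : G.edgeSet => x ∈ (e : Sym2 V)] (r : ℝ) :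
    ∑ e : G.edgeSet, (if x ∈ (e : Sym2 V) then r else 0) = G.degree x * r := by
  rw [sum_ite, sum_const_zero, add_zero, sum_const, nsmul_eq_mul, ← Fintype.card_subtype,
    ← G.card_incidenceSet_eq_degree]
  congr 2
  exact Fintype.card_congr (Equiv.subtypeSubtypeEquivSubtypeInter (· ∈ G.edgeSet) (x ∈ ·))

theorem sum_ite_mem_edge [DecidableEq V] (e : G.edgeSet) [DecidablePred (· ∈ (e : Sym2 V))]
    (r : ℝ) : ∑ z : V, (if z ∈ (e : Sym2 V) then r else 0) = 2 * r := by
  have hfilter : ({z | z ∈ (e : Sym2 V)} : Finset V) = (e : Sym2 V).toFinset := by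
    ext; simp
  rw [sum_ite, sum_const_zero, add_zero, sum_const, nsmul_eq_mul, hfilter,
    Sym2.card_toFinset_of_not_isDiag _ (G.not_isDiag_of_mem_edgeSet e.2)]
  norm_num

variable [DecidableRel G.Adj]

/-- The degree function of `subdivisionGraph G`. -/
def subdivisionWeight : V ⊕ G.edgeSet → ℝ :=
  Sum.elim (fun x => (G.degree x : ℝ)) (fun _ => 2)

@[simp]
theorem subdivisionWeight_inl (x : V) : subdivisionWeight G (.inl x) = G.degree x := rfl

@[simp]
theorem subdivisionWeight_inr (e : G.edgeSet) : subdivisionWeight G (.inr e) = 2 := rfl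

open scoped Classical in
noncomputable def subdivisionWalk : Matrix (V ⊕ G.edgeSet) (V ⊕ G.edgeSet) ℝ :=
  fun a b => if (subdivisionGraph G).Adj a b then 1 / subdivisionWeight G a else 0

open scoped Classical in
theorem subdivisionWeight_mul_subdivisionWalk (a b : V ⊕ G.edgeSet) :
    subdivisionWeight G a * subdivisionWalk G a b =
      if (subdivisionGraph G).Adj a b then 1 else 0 := by
  unfold subdivisionWalk
  split_ifs with hab
  · refine mul_one_div_cancel ?_
    rcases a with x | e <;> rcases b with y | f <;> simp only [subdivisionGraph] at hab
    · have hadj : G.Adj x (Sym2.Mem.other hab) :=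
        G.mem_edgeSet.mp ((Sym2.other_spec hab).symm ▸ f.2)
      simpa [subdivisionWeight] using ((G.degree_pos_iff_exists_adj x).mpr ⟨_, hadj⟩).ne'
    · simp [subdivisionWeight]
  · exact mul_zero _

theorem isWeightedSymm_subdivisionWalk :
    IsWeightedSymm (subdivisionWeight G) (subdivisionWalk G) := fun a b => by
  rw [subdivisionWeight_mul_subdivisionWalk, subdivisionWeight_mul_subdivisionWalk,
    (subdivisionGraph G).adj_comm]

theorem sum_subdivisionWeight_mul_elim (c d : ℝ) :
    ∑ a, subdivisionWeight G a * Sum.elim (fun _ => c) (fun _ => d) a =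
      2 * #G.edgeFinset * (c + d) := by
  simp only [Fintype.sum_sum_type, subdivisionWeight, Sum.elim_inl, Sum.elim_inr, ← sum_mul,
    sum_const, card_univ, nsmul_eq_mul, ← Nat.cast_sum, sum_degrees_eq_twice_card_edges,
    edgeFinset_card]
  push_cast
  ring

theorem sum_subdivisionWeight : ∑ a, subdivisionWeight G a = 4 * #G.edgeFinset := by
  have h := sum_subdivisionWeight_mul_elim G 1 1
  simp only [Sum.elim_lam_const_lam_const, mul_one] at h
  rw [h]
  ring

theorem sum_subdivisionWeight_mul_subdivisionSign :
    ∑ a, subdivisionWeight G a * subdivisionSign G a = 0 := by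
  simpa using sum_subdivisionWeight_mul_elim G 1 (-1)

variable {G} [DecidableEq V]

theorem subdivisionWalk_mulVec_elim (hdeg : ∀ x, G.degree x ≠ 0) (c d : ℝ) :
    subdivisionWalk G *ᵥ Sum.elim (fun _ => c) (fun _ => d) =
      Sum.elim (fun _ => d) (fun _ => c) := by
  ext (x | e) <;>
    simp [mulVec, dotProduct, Fintype.sum_sum_type, subdivisionWalk, subdivisionWeight, ite_mul]
  · rw [sum_edgeSet_ite_mem, mul_inv_cancel_left₀ (Nat.cast_ne_zero.mpr (hdeg x))]
  · rw [sum_ite_mem_edge]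
    ring

theorem subdivisionWalk_pow_two_mul_mulVec_of_mem_span (hdeg : ∀ x, G.degree x ≠ 0) (k : ℕ)
    {v : V ⊕ G.edgeSet → ℝ} (hv : v ∈ Submodule.span ℝ {fun _ => 1, subdivisionSign G}) :
    (subdivisionWalk G ^ (2 * k)) *ᵥ v = v := by
  have hfixed : ∀ {u} {c : ℝ}, subdivisionWalk G *ᵥ u = c • u → c ^ 2 = 1 →
      u ∈ LinearMap.eqLocus (subdivisionWalk G ^ (2 * k)).mulVecLin LinearMap.id :=
    fun hu hc => by
      rw [LinearMap.mem_eqLocus, mulVecLin_apply, pow_mulVec_of_mulVec_eq_smul hu, pow_mul, hc,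
        one_pow, one_smul, LinearMap.id_apply]
  have hone : subdivisionWalk G *ᵥ (fun _ => 1) = (1 : ℝ) • fun _ => 1 := by
    simpa [Sum.elim_lam_const_lam_const] using subdivisionWalk_mulVec_elim hdeg 1 1
  have hsign : subdivisionWalk G *ᵥ subdivisionSign G = (-1 : ℝ) • subdivisionSign G := by
    rw [neg_one_smul, subdivisionSign, subdivisionWalk_mulVec_elim hdeg]
    ext (x | e) <;> simp
  exact LinearMap.mem_eqLocus.mp <| Submodule.span_le.mpr
    (Set.pair_subset (hfixed hone (one_pow 2)) (hfixed hsign (by norm_num))) hv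

end Subdivision

open scoped Classical in
/-- For the subdivision graph `G̃` of a finite connected graph `G`:
for every `k ∈ ℕ` and all `x, y ∈ V(G)`, `(Π Q̃^{2k})(x,y) = π_G(y)`, where
`Q̃` is the simple random walk transition matrix on `G̃`, `Π` is the orthogonal
projection onto `span(𝟏, w)` in `ℓ²(π̃)`, and `π_G` is the stationary
distribution of the random walk on `G`. -/
theorem proj_mul_pow_eq_stationary {V : Type*} [Fintype V] [DecidableEq V]
    (G : SimpleGraph V) [DecidableRel G.Adj] (hG : G.Connected) [Nontrivial V]
    (tildeπ : V ⊕ G.edgeSet → ℝ)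
    (hπ : ∀ a, tildeπ a = Sum.elim (fun x => (G.degree x : ℝ)) (fun _ => 2) a)
    (w : V ⊕ G.edgeSet → ℝ)
    (hw : ∀ a, w a = Sum.elim (fun _ => (1 : ℝ)) (fun _ => -1) a)
    (tQ : Matrix (V ⊕ G.edgeSet) (V ⊕ G.edgeSet) ℝ)
    (htQ : ∀ a b, tQ a b = if (subdivisionGraph G).Adj a b then 1 / tildeπ a else 0)
    (Pr : Matrix (V ⊕ G.edgeSet) (V ⊕ G.edgeSet) ℝ)
    -- `Π` is idempotent, self-adjoint in `ℓ²(π̃)`, with range `span(𝟏, w)`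
    (hPr2 : Pr * Pr = Pr)
    (hPrsa : ∀ a b, tildeπ a * Pr a b = tildeπ b * Pr b a)
    (hrange : LinearMap.range Pr.mulVecLin
      = Submodule.span ℝ {(fun _ => (1 : ℝ)), w}) :
    ∀ (k : ℕ) (x y : V),
      (Pr * tQ ^ (2 * k)) (Sum.inl x) (Sum.inl y)
        = (G.degree y : ℝ) / (2 * G.edgeFinset.card) := by
  intro k x y
  obtain rfl : tildeπ = subdivisionWeight G := funext hπ
  obtain rfl : w = subdivisionSign G := funext hw
  obtain rfl : tQ = subdivisionWalk G := Matrix.ext htQ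
  have hdeg : ∀ x, G.degree x ≠ 0 := fun x => (hG.preconnected.degree_pos_of_nontrivial x).ne'
  have hE : (#G.edgeFinset : ℝ) ≠ 0 := Nat.cast_ne_zero.mpr
    ((Nat.pos_of_ne_zero (hdeg x)).trans_le (G.degree_le_card_edgeFinset x)).ne'
  have h4 : (4 * #G.edgeFinset : ℝ) ≠ 0 := mul_ne_zero four_ne_zero hE
  have hmass : ∑ a, subdivisionWeight G a * subdivisionSign G a * subdivisionSign G a =
      4 * #G.edgeFinset := by
    simp_rw [mul_assoc, subdivisionSign_mul_self, mul_one, sum_subdivisionWeight]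
  have hPr := Pr.apply_eq_of_range_eq_span_pair hPr2 hPrsa hrange
    (by simpa only [one_mul, mul_one] using sum_subdivisionWeight_mul_subdivisionSign G)
    (by simpa only [mul_one, sum_subdivisionWeight] using h4) (hmass ▸ h4)
  have hfix : subdivisionWalk G ^ (2 * k) * Pr = Pr :=
    Matrix.mul_eq_right_of_forall_mem_range fun v hv =>
      subdivisionWalk_pow_two_mul_mulVec_of_mem_span hdeg k (hrange ▸ hv)
  have hweight : ∀ a, IsUnit (subdivisionWeight G a) := by
    rintro (x | e) <;> simp [hdeg]
  rw [Matrix.IsWeightedSymm.mul_eq_left_of_mul_eq_right hweight hPrsa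
    ((isWeightedSymm_subdivisionWalk G).pow _) hfix, hPr, hmass]
  simp only [mul_one, sum_subdivisionWeight, subdivisionSign_inl, subdivisionWeight_inl]
  field_simp
  ring
end

section
/- Let $(Z_k(\tilde x))_{k\in\mathbb N,\tilde x\in V(\tilde G)}$ be independent centred Gaussian random variables with $\mathrm{Var}\,Z_k(\tilde x)=C_0/\tilde\pi(\tilde x)$, and set $\xi^k(x)=((\mathrm{Id}-\Pi)\tilde Q^k Z_k)(x)$ for $x\in V(G)$. Then for every $k$ and all $x,y\in V(G)$, $\mathrm{Cov}(\xi^k(x),\xi^k(y))=\frac{C_0}{\deg_G(y)}\big(\tilde Q^{2k}(x,y)-\pi_G(y)\big)$. -/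
open SimpleGraph Finset MeasureTheory ProbabilityTheory

/-!
Write `M = (1 - Π) Q̃^k` and `D = diag π̃`. Since `ξ^k = M Z_k` and `Z_k` has independent
coordinates of variance `C₀ / π̃`, `Cov ξ^k = C₀ M D⁻¹ Mᵀ`. Reversibility of `Q̃` and
`π̃`-self-adjointness of `Π` say `Q̃ D⁻¹ = D⁻¹ Q̃ᵀ` and `Π D⁻¹ = D⁻¹ Πᵀ`. As `Q̃` fixes `1` and
negates `w`, `Q̃²` is the identity on the range of `Π`, so `Q̃² Π = Π = Π Q̃²` and
`M D⁻¹ Mᵀ = (Q̃^{2k} - Π) D⁻¹`. Finally `1` and `w` are `π̃`-orthogonal with squared norms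
`π̃(Ṽ) = 4|E|`, so `Π(x, y) = π̃(y) (1 + w(x) w(y)) / 4|E| = deg y / 2|E|` for vertices `x, y`.
-/

open scoped Matrix

namespace Matrix

section CommRing

variable {n R : Type*} [Fintype n] [CommRing R]

lemma mul_eq_right_of_mulVec_eq_self {A P : Matrix n n R}
    (h : ∀ u ∈ LinearMap.range P.mulVecLin, A *ᵥ u = u) : A * P = P :=
  ext_iff_mulVec.mpr fun u => by rw [← mulVec_mulVec]; exact h _ ⟨u, rfl⟩

lemma mulVec_eq_self_of_mem_range {P : Matrix n n R} (hP : P * P = P) {u : n → R}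
    (hu : u ∈ LinearMap.range P.mulVecLin) : P *ᵥ u = u := by
  obtain ⟨t, rfl⟩ := hu
  rw [mulVecLin_apply, mulVec_mulVec, hP]

variable [DecidableEq n]

lemma mul_diagonal_mul_transpose_apply {m : Type*} (M : Matrix m n R) (d : n → R) (i j : m) :
    (M * diagonal d * Mᵀ) i j = ∑ a, M i a * M j a * d a := by
  rw [mul_apply]
  simp only [mul_diagonal, transpose_apply]
  exact Finset.sum_congr rfl fun a _ => by ring

lemma pow_mul_eq_mul_transpose_pow {A Λ : Matrix n n R} (h : A * Λ = Λ * Aᵀ) (m : ℕ) :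
    A ^ m * Λ = Λ * (A ^ m)ᵀ := by
  rw [transpose_pow]
  exact (SemiconjBy.pow_right (h.symm : SemiconjBy Λ Aᵀ A) m).symm

lemma mul_eq_left_of_mul_eq_right {A P Λ : Matrix n n R} (hΛ : IsUnit Λ)
    (hAΛ : A * Λ = Λ * Aᵀ) (hPΛ : P * Λ = Λ * Pᵀ) (hAP : A * P = P) : P * A = P := by
  refine hΛ.mul_left_injective ?_
  calc P * A * Λ = P * Λ * Aᵀ := by rw [Matrix.mul_assoc, hAΛ, Matrix.mul_assoc]
    _ = Λ * (A * P)ᵀ := by rw [hPΛ, transpose_mul, Matrix.mul_assoc]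
    _ = P * Λ := by rw [hAP, hPΛ]

lemma one_sub_mul_mul_mul_transpose {P Q Λ : Matrix n n R} (hP : P * P = P)
    (hPΛ : P * Λ = Λ * Pᵀ) (hQΛ : Q * Λ = Λ * Qᵀ) (hQP : Q * Q * P = P)
    (hPQ : P * (Q * Q) = P) :
    (1 - P) * Q * Λ * ((1 - P) * Q)ᵀ = (Q * Q - P) * Λ := by
  have hΛP : Λ * (1 - P)ᵀ = (1 - P) * Λ := by
    rw [transpose_sub, transpose_one, Matrix.mul_sub, Matrix.sub_mul, ← hPΛ, Matrix.mul_one,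
      Matrix.one_mul]
  have hsandwich : (1 - P) * (Q * Q) * (1 - P) = Q * Q - P := by
    rw [Matrix.sub_mul, Matrix.one_mul, hPQ, Matrix.sub_mul, Matrix.mul_sub, Matrix.mul_sub,
      Matrix.mul_one, Matrix.mul_one, hQP, hP, sub_self, sub_zero]
  calc (1 - P) * Q * Λ * ((1 - P) * Q)ᵀ = (1 - P) * (Q * (Λ * Qᵀ)) * (1 - P)ᵀ := by
        rw [transpose_mul]; simp only [Matrix.mul_assoc]
    _ = (1 - P) * (Q * Q) * (Λ * (1 - P)ᵀ) := by
        rw [← hQΛ]; simp only [Matrix.mul_assoc]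
    _ = (Q * Q - P) * Λ := by rw [hΛP, ← hsandwich]; simp only [Matrix.mul_assoc]

end CommRing

section DetailedBalance

variable {n : Type*} [Fintype n] {π : n → ℝ} {P : Matrix n n ℝ}

lemma mul_diagonal_inv_of_detailed_balance [DecidableEq n] (hπ : ∀ a, π a ≠ 0)
    (hPπ : ∀ a b, π a * P a b = π b * P b a) :
    P * diagonal π⁻¹ = diagonal π⁻¹ * Pᵀ := by
  ext a b
  rw [mul_diagonal, diagonal_mul, transpose_apply, Pi.inv_apply, Pi.inv_apply,
    ← div_eq_mul_inv, inv_mul_eq_div, div_eq_div_iff (hπ b) (hπ a)]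
  linear_combination hPπ a b

lemma sum_mul_mul_apply_of_detailed_balance (hPπ : ∀ a b, π a * P a b = π b * P b a)
    (u : n → ℝ) (b : n) : ∑ i, π i * u i * P i b = π b * (P *ᵥ u) b := by
  simp only [mulVec, dotProduct, Finset.mul_sum]
  exact Finset.sum_congr rfl fun i _ => by rw [mul_right_comm, hPπ]; ring

theorem apply_eq_of_range_eq_span_pair_s7 [DecidableEq n] {u₁ u₂ : n → ℝ} (hP : P * P = P)
    (hPπ : ∀ a b, π a * P a b = π b * P b a)
    (hrange : LinearMap.range P.mulVecLin = Submodule.span ℝ {u₁, u₂})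
    (horth : ∑ i, π i * u₁ i * u₂ i = 0) (hu₁ : ∑ i, π i * u₁ i * u₁ i ≠ 0)
    (hu₂ : ∑ i, π i * u₂ i * u₂ i ≠ 0) (a b : n) :
    P a b = π b * (u₁ a * u₁ b / ∑ i, π i * u₁ i * u₁ i
      + u₂ a * u₂ b / ∑ i, π i * u₂ i * u₂ i) := by
  obtain ⟨c, d, hcd⟩ : ∃ c d : ℝ, c • u₁ + d • u₂ = fun i => P i b := by
    rw [← Submodule.mem_span_pair, ← hrange]
    exact ⟨Pi.single b 1, by rw [mulVecLin_apply, mulVec_single_one]; rfl⟩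
  have hcol : ∀ i, P i b = c * u₁ i + d * u₂ i := fun i => by
    simpa using (congrFun hcd i).symm
  -- pair the column `P · b` with `u ∈ range P` in two ways: `P u = u` and self-adjointness
  have hpair : ∀ u ∈ ({u₁, u₂} : Set (n → ℝ)), π b * u b
      = c * ∑ i, π i * u i * u₁ i + d * ∑ i, π i * u i * u₂ i := by
    intro u hu
    have hu' : u ∈ LinearMap.range P.mulVecLin := hrange ▸ Submodule.subset_span hu
    rw [← congrFun (mulVec_eq_self_of_mem_range hP hu') b,
      ← sum_mul_mul_apply_of_detailed_balance hPπ, Finset.mul_sum, Finset.mul_sum,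
      ← Finset.sum_add_distrib]
    exact Finset.sum_congr rfl fun i _ => by rw [hcol]; ring
  have hc := hpair u₁ (by simp)
  have hd := hpair u₂ (by simp)
  have horth' : ∑ i, π i * u₂ i * u₁ i = 0 := by
    rw [← horth]; exact Finset.sum_congr rfl fun i _ => by ring
  rw [horth, mul_zero, add_zero] at hc
  rw [horth', mul_zero, zero_add] at hd
  rw [hcol, eq_div_of_mul_eq hu₁ hc.symm, eq_div_of_mul_eq hu₂ hd.symm]
  ring

end DetailedBalance

end Matrix

section Covariance

variable {ι Ω : Type*} [Fintype ι] {mΩ : MeasurableSpace Ω} {P : Measure Ω}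
  [IsFiniteMeasure P] {Z : ι → Ω → ℝ}

lemma covariance_sum_const_mul_of_pairwise_indep (hZ : ∀ i, MemLp (Z i) 2 P)
    (hindep : Pairwise fun i j => IndepFun (Z i) (Z j) P) (c d : ι → ℝ) :
    cov[fun ω => ∑ i, c i * Z i ω, fun ω => ∑ i, d i * Z i ω; P]
      = ∑ i, c i * d i * Var[Z i; P] := by
  classical
  rw [covariance_fun_sum_fun_sum (fun i => (hZ i).const_mul (c i))
    (fun i => (hZ i).const_mul (d i))]
  refine Finset.sum_congr rfl fun i _ => ?_
  rw [Finset.sum_eq_single i]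
  · rw [covariance_const_mul_left, covariance_const_mul_right,
      covariance_self (hZ i).aestronglyMeasurable.aemeasurable]
    ring
  · intro j _ hji
    rw [covariance_const_mul_left, covariance_const_mul_right,
      (hindep hji.symm).covariance_eq_zero (hZ i) (hZ j), mul_zero, mul_zero]
  · exact fun h => absurd (Finset.mem_univ i) h

lemma covariance_sum_const_mul_of_hasLaw_gaussianReal {m : ι → ℝ} {v : ι → NNReal}
    (hZ : ∀ i, HasLaw (Z i) (gaussianReal (m i) (v i)) P)
    (hindep : Pairwise fun i j => IndepFun (Z i) (Z j) P) (c d : ι → ℝ) :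
    cov[fun ω => ∑ i, c i * Z i ω, fun ω => ∑ i, d i * Z i ω; P]
      = ∑ i, c i * d i * v i := by
  rw [covariance_sum_const_mul_of_pairwise_indep (fun i => (hZ i).hasGaussianLaw.memLp_two)
    hindep]
  simp only [(hZ _).variance_eq, variance_id_gaussianReal]

end Covariance

def bipartitionSign {α β : Type*} : α ⊕ β → ℝ := Sum.elim (fun _ => 1) (fun _ => -1)

lemma bipartitionSign_mul_self {α β : Type*} (a : α ⊕ β) :
    bipartitionSign a * bipartitionSign a = 1 := by
  cases a <;> simp [bipartitionSign]

namespace SimpleGraph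

variable {V : Type*} [Fintype V] (G : SimpleGraph V)

lemma sum_ite_mem_edge [DecidableEq V] (e : G.edgeSet) (c : ℝ) :
    ∑ u : V, (if u ∈ (e : Sym2 V) then c else 0) = 2 * c := by
  obtain ⟨e, he⟩ := e
  induction e using Sym2.ind with | h u₁ u₂ => ?_
  have hpair : univ.filter (· ∈ s(u₁, u₂)) = {u₁, u₂} := by ext; simp
  rw [Finset.sum_ite, sum_const_zero, add_zero, sum_const, nsmul_eq_mul, hpair,
    card_pair (G.ne_of_adj he)]
  norm_num

variable [DecidableRel G.Adj]

lemma sum_edgeSet_ite_mem [DecidableEq V] (z : V) (c : ℝ) :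
    ∑ e : G.edgeSet, (if z ∈ (e : Sym2 V) then c else 0) = G.degree z * c := by
  rw [← Finset.sum_subtype G.edgeFinset (fun e => mem_edgeFinset)
    (fun e => if z ∈ e then c else 0), ← Finset.sum_filter, ← incidenceFinset_eq_filter,
    sum_const, card_incidenceFinset_eq_degree, nsmul_eq_mul]

def subdivisionWeight : V ⊕ G.edgeSet → ℝ :=
  Sum.elim (fun x => (G.degree x : ℝ)) (fun _ => 2)

lemma sum_subdivisionWeight : ∑ a, G.subdivisionWeight a = 4 * #G.edgeFinset := by
  simp only [Fintype.sum_sum_type, subdivisionWeight, Sum.elim_inl, Sum.elim_inr,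
    ← Nat.cast_sum, G.sum_degrees_eq_twice_card_edges, Nat.cast_mul, Nat.cast_ofNat,
    sum_const, card_univ, nsmul_eq_mul, ← G.edgeFinset_card]
  ring

lemma sum_subdivisionWeight_mul_bipartitionSign :
    ∑ a, G.subdivisionWeight a * bipartitionSign a = 0 := by
  simp only [Fintype.sum_sum_type, subdivisionWeight, bipartitionSign, Sum.elim_inl,
    Sum.elim_inr, mul_one, ← Nat.cast_sum, G.sum_degrees_eq_twice_card_edges, Nat.cast_mul,
    Nat.cast_ofNat, sum_const, card_univ, nsmul_eq_mul, ← G.edgeFinset_card]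
  ring

open scoped Classical in
noncomputable def subdivisionWalk : Matrix (V ⊕ G.edgeSet) (V ⊕ G.edgeSet) ℝ :=
  fun a b => if (subdivisionGraph G).Adj a b then 1 / G.subdivisionWeight a else 0

@[simp]
lemma subdivisionWalk_inl_inl (x y : V) : G.subdivisionWalk (.inl x) (.inl y) = 0 := by
  simp [subdivisionWalk, subdivisionGraph]

@[simp]
lemma subdivisionWalk_inr_inr (e f : G.edgeSet) : G.subdivisionWalk (.inr e) (.inr f) = 0 := by
  simp [subdivisionWalk, subdivisionGraph]

lemma subdivisionWalk_inl_inr [DecidableEq V] (z : V) (e : G.edgeSet) :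
    G.subdivisionWalk (.inl z) (.inr e)
      = if z ∈ (e : Sym2 V) then 1 / (G.degree z : ℝ) else 0 := by
  simp [subdivisionWalk, subdivisionGraph, subdivisionWeight]

lemma subdivisionWalk_inr_inl [DecidableEq V] (e : G.edgeSet) (z : V) :
    G.subdivisionWalk (.inr e) (.inl z) = if z ∈ (e : Sym2 V) then 1 / 2 else 0 := by
  simp [subdivisionWalk, subdivisionGraph, subdivisionWeight]

variable {G}

lemma subdivisionWeight_pos (hdeg : ∀ z, 0 < G.degree z) (a : V ⊕ G.edgeSet) :
    0 < G.subdivisionWeight a := by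
  cases a with
  | inl z => show (0 : ℝ) < G.degree z; exact_mod_cast hdeg z
  | inr e => exact two_pos

lemma subdivisionWalk_detailed_balance (hdeg : ∀ z, 0 < G.degree z) (a b : V ⊕ G.edgeSet) :
    G.subdivisionWeight a * G.subdivisionWalk a b
      = G.subdivisionWeight b * G.subdivisionWalk b a := by
  have hπ := fun c => (subdivisionWeight_pos hdeg c).ne'
  by_cases hab : (subdivisionGraph G).Adj a b
  · simp [subdivisionWalk, hab, hab.symm, hπ]
  · have hba : ¬(subdivisionGraph G).Adj b a := fun h => hab h.symm
    simp [subdivisionWalk, hab, hba]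

lemma subdivisionWalk_mulVec_one (hdeg : ∀ z, 0 < G.degree z) :
    G.subdivisionWalk *ᵥ (fun _ => 1) = fun _ => 1 := by
  classical
  funext a
  cases a with
  | inl z =>
    have hz : (G.degree z : ℝ) ≠ 0 := by exact_mod_cast (hdeg z).ne'
    simp [Matrix.mulVec, dotProduct, Fintype.sum_sum_type, subdivisionWalk_inl_inr,
      sum_edgeSet_ite_mem, hz]
  | inr e =>
    simp [Matrix.mulVec, dotProduct, Fintype.sum_sum_type, subdivisionWalk_inr_inl,
      sum_ite_mem_edge]

lemma subdivisionWalk_mulVec_bipartitionSign (hdeg : ∀ z, 0 < G.degree z) :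
    G.subdivisionWalk *ᵥ bipartitionSign = -bipartitionSign := by
  funext a
  -- the walk only moves between the two sides of the bipartition
  have hflip : ∀ b, G.subdivisionWalk a b * bipartitionSign b
      = -bipartitionSign a * G.subdivisionWalk a b := by
    intro b
    cases a <;> cases b <;> simp [bipartitionSign, mul_comm]
  have hrow := congrFun (subdivisionWalk_mulVec_one hdeg) a
  simp only [Matrix.mulVec, dotProduct, mul_one] at hrow
  simp only [Matrix.mulVec, dotProduct, hflip, ← Finset.mul_sum, hrow, Pi.neg_apply, mul_one]

lemma subdivisionWalk_mul_self_mulVec_of_mem_span (hdeg : ∀ z, 0 < G.degree z)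
    {u : V ⊕ G.edgeSet → ℝ} (hu : u ∈ Submodule.span ℝ {fun _ => 1, bipartitionSign}) :
    (G.subdivisionWalk * G.subdivisionWalk) *ᵥ u = u := by
  refine (Submodule.span_le (p := LinearMap.eqLocus
    (G.subdivisionWalk * G.subdivisionWalk).mulVecLin LinearMap.id)).mpr ?_ hu
  rintro _ (rfl | rfl) <;>
    simp [subdivisionWalk_mulVec_one hdeg, subdivisionWalk_mulVec_bipartitionSign hdeg,
      Matrix.mulVec_neg]

variable {Pr : Matrix (V ⊕ G.edgeSet) (V ⊕ G.edgeSet) ℝ}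

lemma apply_inl_inl_of_range_eq_span (hdeg : ∀ z, 0 < G.degree z) (hPr : Pr * Pr = Pr)
    (hPrπ : ∀ a b, G.subdivisionWeight a * Pr a b = G.subdivisionWeight b * Pr b a)
    (hrange : LinearMap.range Pr.mulVecLin = Submodule.span ℝ {fun _ => 1, bipartitionSign})
    (x y : V) : Pr (Sum.inl x) (Sum.inl y) = G.degree y / (2 * #G.edgeFinset) := by
  classical
  have hN := G.sum_subdivisionWeight
  have hN0 : (4 * #G.edgeFinset : ℝ) ≠ 0 :=
    hN ▸ (Finset.sum_pos (fun a _ => subdivisionWeight_pos hdeg a)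
      ⟨Sum.inl x, mem_univ _⟩).ne'
  have hN₁ : ∑ a, G.subdivisionWeight a * 1 * 1 = 4 * #G.edgeFinset := by simpa using hN
  have hN₂ : ∑ a, G.subdivisionWeight a * bipartitionSign a * bipartitionSign a
      = 4 * #G.edgeFinset := by
    simpa [mul_assoc, bipartitionSign_mul_self] using hN
  have horth : ∑ a, G.subdivisionWeight a * 1 * bipartitionSign a = 0 := by
    simpa using G.sum_subdivisionWeight_mul_bipartitionSign
  rw [Matrix.apply_eq_of_range_eq_span_pair_s7 hPr hPrπ hrange horth (hN₁ ▸ hN0) (hN₂ ▸ hN0),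
    hN₁, hN₂]
  simp only [subdivisionWeight, bipartitionSign, Sum.elim_inl]
  field_simp
  ring

lemma sum_mul_mul_inv_subdivisionWeight [DecidableEq V] (hdeg : ∀ z, 0 < G.degree z)
    (hPr : Pr * Pr = Pr)
    (hPrπ : ∀ a b, G.subdivisionWeight a * Pr a b = G.subdivisionWeight b * Pr b a)
    (hrange : LinearMap.range Pr.mulVecLin = Submodule.span ℝ {fun _ => 1, bipartitionSign})
    (k : ℕ) (x y : V) :
    ∑ a, ((1 - Pr) * G.subdivisionWalk ^ k) (Sum.inl x) a
        * ((1 - Pr) * G.subdivisionWalk ^ k) (Sum.inl y) a * (G.subdivisionWeight a)⁻¹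
      = ((G.subdivisionWalk ^ (2 * k)) (Sum.inl x) (Sum.inl y) - G.degree y / (2 * #G.edgeFinset))
        / G.degree y := by
  classical
  set Q := G.subdivisionWalk
  set π := G.subdivisionWeight
  have hπ : ∀ a, π a ≠ 0 := fun a => (subdivisionWeight_pos hdeg a).ne'
  have hQΛ : Q * Matrix.diagonal π⁻¹ = Matrix.diagonal π⁻¹ * Qᵀ :=
    Matrix.mul_diagonal_inv_of_detailed_balance hπ (subdivisionWalk_detailed_balance hdeg)
  have hPrΛ := Matrix.mul_diagonal_inv_of_detailed_balance hπ hPrπ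
  have hΛ : IsUnit (Matrix.diagonal π⁻¹) :=
    Matrix.isUnit_diagonal.mpr (Pi.isUnit_iff.mpr fun a => (inv_ne_zero (hπ a)).isUnit)
  have hQ2Pr : Q ^ 2 * Pr = Pr := by
    rw [sq]
    exact Matrix.mul_eq_right_of_mulVec_eq_self fun u hu =>
      subdivisionWalk_mul_self_mulVec_of_mem_span hdeg (hrange ▸ hu)
  have hQkPr : Q ^ k * Q ^ k * Pr = Pr := by
    rw [← pow_add, ← two_mul, pow_mul, ← mul_left_iterate_apply]
    exact Function.IsFixedPt.iterate hQ2Pr k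
  have hPrQk : Pr * (Q ^ k * Q ^ k) = Pr :=
    Matrix.mul_eq_left_of_mul_eq_right hΛ
      (by rw [← pow_add]; exact Matrix.pow_mul_eq_mul_transpose_pow hQΛ _) hPrΛ hQkPr
  have hentry :=
    Matrix.mul_diagonal_mul_transpose_apply ((1 - Pr) * Q ^ k) π⁻¹ (Sum.inl x) (Sum.inl y)
  rw [Matrix.one_sub_mul_mul_mul_transpose hPr hPrΛ (Matrix.pow_mul_eq_mul_transpose_pow hQΛ k)
      hQkPr hPrQk, ← pow_add, ← two_mul, Matrix.mul_diagonal, Matrix.sub_apply,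
    apply_inl_inl_of_range_eq_span hdeg hPr hPrπ hrange, Pi.inv_apply] at hentry
  exact hentry.symm.trans (div_eq_mul_inv _ _).symm

end SimpleGraph

open scoped Classical in
theorem cov_xi_eq_general {V : Type*} [Fintype V] [DecidableEq V]
    (G : SimpleGraph V) [DecidableRel G.Adj] (hG : G.Connected) [Nontrivial V]
    (tildeπ : V ⊕ G.edgeSet → ℝ)
    (hπ : ∀ a, tildeπ a = Sum.elim (fun x => (G.degree x : ℝ)) (fun _ => 2) a)
    (w : V ⊕ G.edgeSet → ℝ)
    (hw : ∀ a, w a = Sum.elim (fun _ => (1 : ℝ)) (fun _ => -1) a)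
    (tQ : Matrix (V ⊕ G.edgeSet) (V ⊕ G.edgeSet) ℝ)
    (htQ : ∀ a b, tQ a b = if (subdivisionGraph G).Adj a b then 1 / tildeπ a else 0)
    (Pr : Matrix (V ⊕ G.edgeSet) (V ⊕ G.edgeSet) ℝ)
    (hPr2 : Pr * Pr = Pr)
    (hPrsa : ∀ a b, tildeπ a * Pr a b = tildeπ b * Pr b a)
    (hrange : LinearMap.range Pr.mulVecLin
      = Submodule.span ℝ {(fun _ => (1 : ℝ)), w})
    {Ω : Type*} [MeasurableSpace Ω] (P : Measure Ω) [IsProbabilityMeasure P]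
    (C0 : ℝ)
    (v : ℕ → (V ⊕ G.edgeSet) → NNReal)
    (hv : ∀ k a, (v k a : ℝ) = C0 / tildeπ a)
    (Z : ℕ → (V ⊕ G.edgeSet) → Ω → ℝ)
    (hZindep : iIndepFun
      (fun p : ℕ × (V ⊕ G.edgeSet) => Z p.1 p.2) P)
    (hZgauss : ∀ k a, Measure.map (Z k a) P = gaussianReal 0 (v k a))
    (ξ : ℕ → V → Ω → ℝ)
    (hξ : ∀ k x ω, ξ k x ω
      = ∑ a : V ⊕ G.edgeSet, ((1 - Pr) * tQ ^ k) (Sum.inl x) a * Z k a ω) :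
    ∀ (k : ℕ) (x y : V),
      (∫ ω, ξ k x ω * ξ k y ω ∂P)
        - (∫ ω, ξ k x ω ∂P) * (∫ ω, ξ k y ω ∂P)
      = (C0 / (G.degree y : ℝ))
          * ((tQ ^ (2 * k)) (Sum.inl x) (Sum.inl y)
              - (G.degree y : ℝ) / (2 * G.edgeFinset.card)) := by
  intro k x y
  obtain rfl : tildeπ = G.subdivisionWeight := funext hπ
  obtain rfl : w = bipartitionSign := funext hw
  obtain rfl : tQ = G.subdivisionWalk := funext₂ htQ
  have hdeg : ∀ z, 0 < G.degree z := fun z => hG.preconnected.degree_pos_of_nontrivial z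
  have hlaw : ∀ a, HasLaw (Z k a) (gaussianReal 0 (v k a)) P := fun a =>
    ⟨.of_map_ne_zero (by rw [hZgauss]; exact IsProbabilityMeasure.ne_zero _), hZgauss k a⟩
  have hindep : Pairwise fun a b => IndepFun (Z k a) (Z k b) P := fun a b hab =>
    hZindep.indepFun (i := (k, a)) (j := (k, b)) (by simpa using hab)
  have hξ' : ∀ z, ξ k z
      = fun ω => ∑ a, ((1 - Pr) * G.subdivisionWalk ^ k) (Sum.inl z) a * Z k a ω :=
    fun z => funext (hξ k z)
  have hξL : ∀ z, MemLp (ξ k z) 2 P := fun z => by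
    rw [hξ' z]
    exact memLp_finsetSum _ fun a _ => (hlaw a).hasGaussianLaw.memLp_two.const_mul _
  calc (∫ ω, ξ k x ω * ξ k y ω ∂P) - (∫ ω, ξ k x ω ∂P) * (∫ ω, ξ k y ω ∂P)
      = cov[ξ k x, ξ k y; P] := (covariance_eq_sub (hξL x) (hξL y)).symm
    _ = ∑ a, ((1 - Pr) * G.subdivisionWalk ^ k) (Sum.inl x) a
          * ((1 - Pr) * G.subdivisionWalk ^ k) (Sum.inl y) a * v k a := by
        rw [hξ' x, hξ' y, covariance_sum_const_mul_of_hasLaw_gaussianReal hlaw hindep]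
    _ = C0 * ∑ a, ((1 - Pr) * G.subdivisionWalk ^ k) (Sum.inl x) a
          * ((1 - Pr) * G.subdivisionWalk ^ k) (Sum.inl y) a * (G.subdivisionWeight a)⁻¹ := by
        rw [Finset.mul_sum]
        exact Finset.sum_congr rfl fun a _ => by rw [hv, div_eq_mul_inv]; ring
    _ = _ := by rw [sum_mul_mul_inv_subdivisionWeight hdeg hPr2 hPrsa hrange]; ring

open scoped Classical in
/-- Let `(Z_k(x̃))` be independent centred Gaussians with variance
`C₀/π̃(x̃)` on the subdivision graph `G̃` of a finite connected graph `G`,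
and let `ξ^k(x) = ((Id - Π) Q̃^k Z_k)(x)` for `x ∈ V(G)`.  Then for every `k`
and all `x, y ∈ V(G)`,
`Cov(ξ^k(x), ξ^k(y)) = (C₀/deg_G(y)) (Q̃^{2k}(x,y) - π_G(y))`. -/
theorem cov_xi_eq {V : Type*} [Fintype V] [DecidableEq V]
    (G : SimpleGraph V) [DecidableRel G.Adj] (hG : G.Connected) [Nontrivial V]
    (tildeπ : V ⊕ G.edgeSet → ℝ)
    (hπ : ∀ a, tildeπ a = Sum.elim (fun x => (G.degree x : ℝ)) (fun _ => 2) a)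
    (w : V ⊕ G.edgeSet → ℝ)
    (hw : ∀ a, w a = Sum.elim (fun _ => (1 : ℝ)) (fun _ => -1) a)
    (tQ : Matrix (V ⊕ G.edgeSet) (V ⊕ G.edgeSet) ℝ)
    (htQ : ∀ a b, tQ a b = if (subdivisionGraph G).Adj a b then 1 / tildeπ a else 0)
    (Pr : Matrix (V ⊕ G.edgeSet) (V ⊕ G.edgeSet) ℝ)
    (hPr2 : Pr * Pr = Pr)
    (hPrsa : ∀ a b, tildeπ a * Pr a b = tildeπ b * Pr b a)
    (hrange : LinearMap.range Pr.mulVecLin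
      = Submodule.span ℝ {(fun _ => (1 : ℝ)), w})
    {Ω : Type*} [MeasurableSpace Ω] (P : Measure Ω) [IsProbabilityMeasure P]
    (C0 : ℝ) (hC0 : 0 < C0)
    (v : ℕ → (V ⊕ G.edgeSet) → NNReal)
    (hv : ∀ k a, (v k a : ℝ) = C0 / tildeπ a)
    (Z : ℕ → (V ⊕ G.edgeSet) → Ω → ℝ)
    (hZmeas : ∀ k a, Measurable (Z k a))
    (hZindep : iIndepFun
      (fun p : ℕ × (V ⊕ G.edgeSet) => Z p.1 p.2) P)
    (hZgauss : ∀ k a, Measure.map (Z k a) P = gaussianReal 0 (v k a))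
    (ξ : ℕ → V → Ω → ℝ)
    (hξ : ∀ k x ω, ξ k x ω
      = ∑ a : V ⊕ G.edgeSet, ((1 - Pr) * tQ ^ k) (Sum.inl x) a * Z k a ω) :
    ∀ (k : ℕ) (x y : V),
      (∫ ω, ξ k x ω * ξ k y ω ∂P)
        - (∫ ω, ξ k x ω ∂P) * (∫ ω, ξ k y ω ∂P)
      = (C0 / (G.degree y : ℝ))
          * ((tQ ^ (2 * k)) (Sum.inl x) (Sum.inl y)
              - (G.degree y : ℝ) / (2 * G.edgeFinset.card)) :=
  cov_xi_eq_general G hG tildeπ hπ w hw tQ htQ Pr hPr2 hPrsa hrange P C0 v hv Z hZindep hZgauss ξ hξ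
end
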